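/- arXiv:2508.08675 — 3 statements merged into one kernel-verified Lean document; each statement's English description precedes it below -/
import Mathlib

section
/- The family {Ir({η}) : η ∈ V_k} of subsets of V_k has the finite intersection property; consequently for any finite set {η₁,…,η_m} ⊆ V_k, Ir({η₁,…,η_m}) = ⋂_{i=1}^m Ir({η_i}) is a nonempty subsemigroup of V_k. -/
/-! Membership in `IrSet η` only asks the support to avoid that of `η`. Since the reals are
infinite, some coefficient `r` occurs in no support of the finitely many `ηᵢ`, and the monomial
supported at `(1, r)` lies in every `IrSet (η i)`; closure under addition holds because the support
of a sum lies in the union of the supports. -/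

noncomputable section

abbrev VSym := (ℕ × ℝ) →₀ (ℕ → ℝ)

def VValid (k : ℕ) (g : VSym) : Prop := ∀ p ∈ g.support, 1 ≤ p.1 ∧ p.1 ≤ k

def IrSet (η : VSym) : Set VSym := {y | Disjoint y.support η.support}

theorem exists_notMem_support_of_snd {ι α β M : Type*} [Fintype ι] [Infinite β] [Zero M]
    (f : ι → (α × β) →₀ M) (a : α) : ∃ b, ∀ i, (a, b) ∉ (f i).support := by
  classical
  obtain ⟨b, hb⟩ :=
    Infinite.exists_notMem_finset ((Finset.univ.biUnion fun i => (f i).support).image Prod.snd)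
  exact ⟨b, fun i h => hb (Finset.mem_image.2 ⟨_, Finset.mem_biUnion.2 ⟨i, Finset.mem_univ _, h⟩, rfl⟩)⟩

theorem vValid_single {k n : ℕ} (h1 : 1 ≤ n) (hk : n ≤ k) (r : ℝ) (v : ℕ → ℝ) :
    VValid k (Finsupp.single (n, r) v) := by
  intro p hp
  obtain rfl := Finset.mem_singleton.1 (Finsupp.support_single_subset hp)
  exact ⟨h1, hk⟩

theorem single_mem_irSet {η : VSym} {p : ℕ × ℝ} (hp : p ∉ η.support) (v : ℕ → ℝ) :
    Finsupp.single p v ∈ IrSet η :=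
  Finset.disjoint_of_subset_left Finsupp.support_single_subset (Finset.disjoint_singleton_left.2 hp)

theorem add_mem_irSet {η x y : VSym} (hx : x ∈ IrSet η) (hy : y ∈ IrSet η) : x + y ∈ IrSet η :=
  Finset.disjoint_of_subset_left Finsupp.support_add (Finset.disjoint_union_left.2 ⟨hx, hy⟩)

theorem stmt8_general (k : ℕ) (hk : 1 ≤ k) (m : ℕ) (η : Fin m → VSym) :
    (∃ y : VSym, VValid k y ∧ y ≠ 0 ∧ ∀ i, y ∈ IrSet (η i)) ∧
    (∀ x y : VSym, (∀ i, x ∈ IrSet (η i)) → (∀ i, y ∈ IrSet (η i)) →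
      ∀ i, x + y ∈ IrSet (η i)) := by
  obtain ⟨r, hr⟩ := exists_notMem_support_of_snd η 1
  exact ⟨⟨Finsupp.single (1, r) 1, vValid_single le_rfl hk r 1, Finsupp.single_ne_zero.2 one_ne_zero,
      fun i => single_mem_irSet (hr i) 1⟩,
    fun _ _ hx hy i => add_mem_irSet (hx i) (hy i)⟩

/-- The family {Ir({η}) : η ∈ V_k} has the finite intersection property:
for every finite {η₁,…,η_m} ⊆ V_k, Ir({η₁,…,η_m}) = ⋂ᵢ Ir({ηᵢ}) is a nonempty (within V_k)
subsemigroup of V_k. -/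
theorem stmt8 (k : ℕ) (hk : 1 ≤ k) (m : ℕ) (η : Fin m → VSym) (hη : ∀ i, VValid k (η i)) :
    (∃ y : VSym, VValid k y ∧ y ≠ 0 ∧ ∀ i, y ∈ IrSet (η i)) ∧
    (∀ x y : VSym, (∀ i, x ∈ IrSet (η i)) → (∀ i, y ∈ IrSet (η i)) →
      ∀ i, x + y ∈ IrSet (η i)) :=
  stmt8_general k hk m η
end
end

section
/- Let S be a dense subsemigroup of (0,1) under the partial addition x ∔ y = x + y when x + y ∈ S, which is adequate. Then V_k(0,S) = {η ∈ V_k : π(η) ∈ S}, with η₁ ∔ η₂ = η₁ + η₂ defined when π(η₁ + η₂) ∈ S, is a commutative adequate partial semigroup; in particular, for every η ∈ V_k(0,S), R(η) ⊇ π^{-1}((0, 1−π(η)) ∩ S) ∩ Ir({η}) ≠ ∅. -/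
/-!
For `s ∈ S`, the one-term element `unitTerm s` (symbol `(1, s)`, coefficient string constantly `1`)
has `π = s`. Choosing `s ∈ S` below the required bound and different from every scalar
occurring in the finitely many given elements makes each sum `η + unitTerm s` irreducible, so
`π` is additive on it, and closure of `S` under sums below `1` puts `π (η + unitTerm s)` back
in `S`.
-/

noncomputable section

def piEval (g : VSym) : ℝ :=
  ∑ p ∈ g.support, p.2 * ∏ j ∈ Finset.Icc 1 p.1, g p j

lemma piEval_add_of_disjoint {η ζ : VSym} (h : Disjoint η.support ζ.support) :
    piEval (η + ζ) = piEval η + piEval ζ := by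
  unfold piEval
  rw [Finsupp.support_add_eq h, Finset.sum_union h]
  congr 1
  · refine Finset.sum_congr rfl fun p hp => ?_
    have hζp : ζ p = 0 := Finsupp.notMem_support_iff.mp (Finset.disjoint_left.mp h hp)
    rw [Finsupp.add_apply, hζp, add_zero]
  · refine Finset.sum_congr rfl fun p hp => ?_
    have hηp : η p = 0 := Finsupp.notMem_support_iff.mp (Finset.disjoint_right.mp h hp)
    rw [Finsupp.add_apply, hηp, zero_add]

lemma piEval_add_mem_of_disjoint {S : Set ℝ} (hclosed : ∀ x ∈ S, ∀ y ∈ S, x + y < 1 → x + y ∈ S)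
    {η ζ : VSym} (h : Disjoint η.support ζ.support) (hη : piEval η ∈ S) (hζ : piEval ζ ∈ S)
    (hlt : piEval η + piEval ζ < 1) : piEval (η + ζ) ∈ S := by
  rw [piEval_add_of_disjoint h]
  exact hclosed _ hη _ hζ hlt

def unitTerm (c : ℝ) : VSym := Finsupp.single (1, c) 1

lemma support_unitTerm (c : ℝ) : (unitTerm c).support = {(1, c)} :=
  Finsupp.support_single _ one_ne_zero

lemma piEval_unitTerm (c : ℝ) : piEval (unitTerm c) = c := by
  simp [piEval, unitTerm]

lemma vValid_unitTerm {k : ℕ} (hk : 1 ≤ k) (c : ℝ) : VValid k (unitTerm c) := by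
  intro p hp
  rw [support_unitTerm, Finset.mem_singleton] at hp
  exact hp ▸ ⟨le_rfl, hk⟩

lemma exists_mem_Ioo_notMem_finset {S : Set ℝ}
    (hdense : ∀ a b : ℝ, 0 ≤ a → a < b → b ≤ 1 → ∃ s ∈ S, a < s ∧ s < b)
    (B : Finset ℝ) {b : ℝ} (hb0 : 0 < b) (hb1 : b ≤ 1) :
    ∃ s ∈ S, 0 < s ∧ s < b ∧ s ∉ B := by
  classical
  -- below the least positive element of `B ∪ {b}` nothing of `B` is positive
  set m := (insert b (B.filter (0 < ·))).min' (Finset.insert_nonempty _ _)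
  have hm0 : 0 < m := by
    rw [Finset.lt_min'_iff]
    simp only [Finset.mem_insert, Finset.mem_filter]
    rintro x (rfl | ⟨-, hx⟩) <;> assumption
  have hmb : m ≤ b := Finset.min'_le _ _ (Finset.mem_insert_self _ _)
  obtain ⟨s, hsS, hs0, hsm⟩ := hdense 0 m le_rfl hm0 (hmb.trans hb1)
  refine ⟨s, hsS, hs0, hsm.trans_le hmb, fun hsB => hsm.not_ge ?_⟩
  exact Finset.min'_le _ _ (Finset.mem_insert_of_mem (Finset.mem_filter.mpr ⟨hsB, hs0⟩))

lemma exists_unitTerm_disjoint {S : Set ℝ}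
    (hdense : ∀ a b : ℝ, 0 ≤ a → a < b → b ≤ 1 → ∃ s ∈ S, a < s ∧ s < b)
    (F : Finset (ℕ × ℝ)) {b : ℝ} (hb0 : 0 < b) (hb1 : b ≤ 1) :
    ∃ s ∈ S, 0 < s ∧ s < b ∧ Disjoint F (unitTerm s).support := by
  classical
  obtain ⟨s, hsS, hs0, hsb, hsF⟩ :=
    exists_mem_Ioo_notMem_finset hdense (F.image Prod.snd) hb0 hb1
  refine ⟨s, hsS, hs0, hsb, ?_⟩
  rw [support_unitTerm, Finset.disjoint_singleton_right]
  exact fun h => hsF (Finset.mem_image_of_mem Prod.snd h)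

/-- For S a dense subsemigroup of (0,1) under the partial addition (adequate),
V_k(0,S) = {η ∈ V_k : π(η) ∈ S}, with η₁ ∔ η₂ = η₁ + η₂ defined when π(η₁ + η₂) ∈ S, is a
commutative adequate partial semigroup; in particular for every η ∈ V_k(0,S),
R(η) ⊇ π⁻¹((0, 1−π(η)) ∩ S) ∩ Ir({η}) ≠ ∅. -/
theorem stmt12 (k : ℕ) (hk : 1 ≤ k) (S : Set ℝ) (hS : S ⊆ Set.Ioo (0:ℝ) 1)
    (hdense : ∀ a b : ℝ, 0 ≤ a → a < b → b ≤ 1 → ∃ s ∈ S, a < s ∧ s < b)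
    (hclosed : ∀ x ∈ S, ∀ y ∈ S, x + y < 1 → x + y ∈ S) :
    -- commutativity of the partial operation
    (∀ η ζ : VSym, η + ζ = ζ + η) ∧
    -- adequacy: every finite subset of V_k(0,S) has a common right-compatible element
    (∀ H : Finset VSym, (∀ η ∈ H, VValid k η ∧ piEval η ∈ S) →
      ∃ ζ : VSym, VValid k ζ ∧ piEval ζ ∈ S ∧ ∀ η ∈ H, piEval (η + ζ) ∈ S) ∧
    -- in particular: R(η) ⊇ π⁻¹((0,1−π(η)) ∩ S) ∩ Ir({η}) ≠ ∅
    (∀ η : VSym, VValid k η → piEval η ∈ S →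
      ({ζ : VSym | piEval ζ ∈ Set.Ioo 0 (1 - piEval η) ∧ piEval ζ ∈ S ∧ ζ ∈ IrSet η} ⊆
        {ζ : VSym | piEval ζ ∈ S ∧ piEval (η + ζ) ∈ S}) ∧
      {ζ : VSym | VValid k ζ ∧ piEval ζ ∈ Set.Ioo 0 (1 - piEval η) ∧ piEval ζ ∈ S ∧
        ζ ∈ IrSet η}.Nonempty) := by
  classical
  refine ⟨add_comm, fun H hH => ?_, fun η _ hηS => ⟨?_, ?_⟩⟩
  · set M := H.fold max 0 piEval
    have hM0 : 0 ≤ M := (Finset.le_fold_max _).mpr (Or.inl le_rfl)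
    have hM1 : M < 1 := (Finset.fold_max_lt _).mpr ⟨one_pos, fun η hη => (hS (hH η hη).2).2⟩
    obtain ⟨s, hsS, -, hsM, hdisj⟩ := exists_unitTerm_disjoint hdense (H.biUnion (·.support))
      (b := 1 - M) (by linarith) (by linarith)
    have hsS' : piEval (unitTerm s) ∈ S := (piEval_unitTerm s).symm ▸ hsS
    refine ⟨unitTerm s, vValid_unitTerm hk s, hsS', fun η hη => ?_⟩
    have hηM : piEval η ≤ M := (Finset.le_fold_max _).mpr (Or.inr ⟨η, hη, le_rfl⟩)
    refine piEval_add_mem_of_disjoint hclosed ?_ (hH η hη).2 hsS' ?_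
    · exact Finset.disjoint_of_subset_left (Finset.subset_biUnion_of_mem _ hη) hdisj
    · rw [piEval_unitTerm]; linarith
  · rintro ζ ⟨⟨-, hζlt⟩, hζS, hζIr⟩
    exact ⟨hζS, piEval_add_mem_of_disjoint hclosed hζIr.symm hηS hζS (by linarith)⟩
  · obtain ⟨s, hsS, hs0, hsη, hdisj⟩ :=
      exists_unitTerm_disjoint hdense η.support (b := 1 - piEval η)
        (by linarith [(hS hηS).2]) (by linarith [(hS hηS).1])
    refine ⟨unitTerm s, vValid_unitTerm hk s, ?_⟩
    rw [piEval_unitTerm]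
    exact ⟨⟨hs0, hsη⟩, hsS, hdisj.symm⟩
end
end

section
/- Let T be an adequate partial semigroup and S ⊆ T an adequate partial subsemigroup that is also an ideal of T. Then δS is a two-sided ideal of δT, and consequently K(δS) = K(δT). -/
noncomputable section

/-- A partial semigroup on a type α: `defined x y` says x∗y is defined, `mul` totalizes the
operation (with junk values off the domain), and associativity holds in the strong sense. -/
structure PartialSemigroup (α : Type*) where
  defined : α → α → Prop
  mul : α → α → α
  assoc_def : ∀ x y z, (defined x y ∧ defined (mul x y) z) ↔ (defined y z ∧ defined x (mul y z))
  assoc : ∀ x y z, defined x y → defined (mul x y) z → mul (mul x y) z = mul x (mul y z)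

namespace PartialSemigroup

variable {α : Type*} (P : PartialSemigroup α)

/-- R_T(x) for the ambient partial semigroup. -/
def RT (x : α) : Set α := {y | P.defined x y}

/-- R_S(x) for the partial subsemigroup on the subset S (inherited operation). -/
def RSub (S : Set α) (x : α) : Set α := {y | y ∈ S ∧ P.defined x y ∧ P.mul x y ∈ S}

/-- δT: ultrafilters containing every ⋂_{x∈H} R_T(x). -/
def deltaT : Set (Ultrafilter α) :=
  {p | ∀ H : Finset α, {y | ∀ x ∈ H, P.defined x y} ∈ p}

/-- δS for the partial subsemigroup on S. -/
def deltaSub (S : Set α) : Set (Ultrafilter α) :=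
  {p | ∀ H : Finset α, ↑H ⊆ S → {y | y ∈ S ∧ ∀ x ∈ H, P.defined x y ∧ P.mul x y ∈ S} ∈ p}

/-- The ultrafilter product: A ∈ p∗q iff {x : {y : x∗y ∈ A} ∈ q} ∈ p. -/
def uprod (p q : Ultrafilter α) : Ultrafilter α := p.bind fun x => q.map (P.mul x)

/-- Two-sided ideals of D under the ultrafilter product. -/
def idealsIn (D : Set (Ultrafilter α)) : Set (Set (Ultrafilter α)) :=
  {I | I ⊆ D ∧ I.Nonempty ∧ ∀ p ∈ D, ∀ q ∈ I, P.uprod p q ∈ I ∧ P.uprod q p ∈ I}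

/-- The smallest two-sided ideal K(D) (intersection of all ideals of D). -/
def K (D : Set (Ultrafilter α)) : Set (Ultrafilter α) := ⋂₀ P.idealsIn D

end PartialSemigroup


/-!
Because S is an ideal of T, products of an element of S with anything are again in S, and this
lets one check on the generating sets R_S(H) that δS absorbs products with δT on both sides.
For an ideal D' of a semigroup D, every ideal J of D meets D' in an ideal J ∩ D' of D', and every
ideal I of D' contains the ideal D' I D' of D; hence the smallest ideals of D and D' coincide.
-/

noncomputable section

namespace PartialSemigroup

variable {α : Type*} (P : PartialSemigroup α)

/-- `⋂_{x ∈ H} R_S(x)`, taken inside `S` (so it is `S` for `H = ∅`). -/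
def RSubInter (S : Set α) (H : Finset α) : Set α :=
  {y | y ∈ S ∧ ∀ x ∈ H, P.defined x y ∧ P.mul x y ∈ S}

variable {P}

lemma mem_uprod {p q : Ultrafilter α} {A : Set α} :
    A ∈ P.uprod p q ↔ {x | {y | P.mul x y ∈ A} ∈ q} ∈ p :=
  Iff.rfl

lemma RT_mem_of_mem_deltaT {p : Ultrafilter α} (hp : p ∈ P.deltaT) (x : α) : P.RT x ∈ p := by
  simpa [RT] using hp {x}

lemma uprod_assoc {p q r : Ultrafilter α} (hq : q ∈ P.deltaT) (hr : r ∈ P.deltaT) :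
    P.uprod (P.uprod p q) r = P.uprod p (P.uprod q r) := by
  refine Ultrafilter.ext fun A => ?_
  suffices h : ∀ x, {b | {y | P.mul (P.mul x b) y ∈ A} ∈ r} ∈ q ↔
      {b | {y | P.mul x (P.mul b y) ∈ A} ∈ r} ∈ q by
    simp only [mem_uprod, Set.mem_ofPred_eq, h]
  intro x
  refine Filter.congr_sets (Filter.mem_of_superset (RT_mem_of_mem_deltaT hq x) fun b hxb => ?_)
  simp only [Set.mem_ofPred_eq]
  refine Filter.congr_sets
    (Filter.mem_of_superset (RT_mem_of_mem_deltaT hr (P.mul x b)) fun y hxby => ?_)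
  simp only [Set.mem_ofPred_eq, P.assoc x b y hxb hxby]

section Subsemigroup

variable {S : Set α}

lemma RSubInter_anti {H H' : Finset α} (h : H ⊆ H') : P.RSubInter S H' ⊆ P.RSubInter S H :=
  fun _ hy => ⟨hy.1, fun x hx => hy.2 x (h hx)⟩

lemma deltaSub_nonempty (hSadeq : ∀ H : Finset α, ↑H ⊆ S → (P.RSubInter S H).Nonempty) :
    (P.deltaSub S).Nonempty := by
  classical
  let F := ⨅ H : {H : Finset α // ↑H ⊆ S}, Filter.principal (P.RSubInter S H)
  have : F.NeBot := by
    have : Nonempty {H : Finset α // ↑H ⊆ S} := ⟨⟨∅, by simp⟩⟩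
    refine Filter.iInf_neBot_of_directed' (fun H₁ H₂ => ?_) fun H => ?_
    · refine ⟨⟨H₁.1 ∪ H₂.1, by simpa using And.intro H₁.2 H₂.2⟩, ?_, ?_⟩ <;>
        exact Filter.principal_mono.2 (RSubInter_anti (by simp))
    · exact Filter.principal_neBot_iff.2 (hSadeq H.1 H.2)
  obtain ⟨u, hu⟩ := Ultrafilter.exists_le F
  exact ⟨u, fun H hH => hu (Filter.mem_iInf_of_mem ⟨H, hH⟩ (Filter.mem_principal_self _))⟩

lemma deltaSub_subset_deltaT
    (hsub : ∀ y : α, ∃ H : Finset α, ↑H ⊆ S ∧ P.RSubInter S H ⊆ P.RT y) :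
    P.deltaSub S ⊆ P.deltaT := by
  classical
  intro q hq H
  choose Hy hHyS hHy using hsub
  refine Filter.mem_of_superset (hq (H.biUnion Hy) (by simpa using fun y _ => hHyS y)) ?_
  exact fun z hz y hy => hHy y (RSubInter_anti (Finset.subset_biUnion_of_mem Hy hy) hz)

variable (hideal : ∀ x ∈ S, ∀ y : α,
  (P.defined x y → P.mul x y ∈ S) ∧ (P.defined y x → P.mul y x ∈ S))
include hideal

lemma uprod_mem_deltaSub_left
    (hsub : ∀ y : α, ∃ H : Finset α, ↑H ⊆ S ∧ P.RSubInter S H ⊆ P.RT y)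
    {p q : Ultrafilter α} (hp : p ∈ P.deltaT) (hq : q ∈ P.deltaSub S) :
    P.uprod p q ∈ P.deltaSub S := by
  classical
  refine fun H hHS => mem_uprod.2 ?_
  refine Filter.mem_of_superset (hp H) fun x hx => ?_
  obtain ⟨Hx, hHxS, hHx⟩ := hsub x
  -- `Hx` makes `x ∗ y` defined; the elements `a ∗ x` give `(a ∗ x) ∗ y = a ∗ (x ∗ y) ∈ S`.
  have hGS : ↑(Hx ∪ H.image (P.mul · x)) ⊆ S := by
    simp only [Finset.coe_union, Finset.coe_image, Set.union_subset_iff, Set.image_subset_iff]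
    exact ⟨hHxS, fun a ha => (hideal a (hHS ha) x).1 (hx a ha)⟩
  refine Filter.mem_of_superset (hq _ hGS) fun y hy => ?_
  have hxy : P.defined x y := hHx (RSubInter_anti Finset.subset_union_left hy)
  refine ⟨(hideal y hy.1 x).2 hxy, fun a ha => ?_⟩
  obtain ⟨haxy, haxyS⟩ :=
    hy.2 (P.mul a x) (Finset.mem_union_right _ (Finset.mem_image_of_mem _ ha))
  refine ⟨((P.assoc_def a x y).1 ⟨hx a ha, haxy⟩).2, ?_⟩
  rwa [← P.assoc a x y (hx a ha) haxy]

lemma uprod_mem_deltaSub_right {p q : Ultrafilter α} (hp : p ∈ P.deltaT)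
    (hq : q ∈ P.deltaSub S) : P.uprod q p ∈ P.deltaSub S := by
  classical
  refine fun H hHS => mem_uprod.2 ?_
  refine Filter.mem_of_superset (hq H hHS) fun y hy => ?_
  refine Filter.mem_of_superset (hp (insert y (H.image (P.mul · y)))) fun z hz => ?_
  have hyz : P.defined y z := hz y (Finset.mem_insert_self _ _)
  refine ⟨(hideal y hy.1 z).1 hyz, fun a ha => ?_⟩
  have hayz : P.defined (P.mul a y) z :=
    hz _ (Finset.mem_insert_of_mem (Finset.mem_image_of_mem _ ha))
  refine ⟨((P.assoc_def a y z).1 ⟨(hy.2 a ha).1, hayz⟩).2, ?_⟩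
  rw [← P.assoc a y z (hy.2 a ha).1 hayz]
  exact (hideal _ (hy.2 a ha).2 z).1 hayz

end Subsemigroup

section SmallestIdeal

variable {D D' : Set (Ultrafilter α)}

lemma inter_mem_idealsIn {J : Set (Ultrafilter α)} (hD' : D' ∈ P.idealsIn D)
    (hJ : J ∈ P.idealsIn D) : J ∩ D' ∈ P.idealsIn D' := by
  obtain ⟨hD'D, ⟨s, hs⟩, hD'abs⟩ := hD'
  obtain ⟨hJD, ⟨q, hq⟩, hJabs⟩ := hJ
  refine ⟨Set.inter_subset_right, ⟨P.uprod q s, (hJabs s (hD'D hs) q hq).2,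
    (hD'abs q (hJD hq) s hs).1⟩, fun p hp r hr => ?_⟩
  exact ⟨⟨(hJabs p (hD'D hp) r hr.1).1, (hD'abs p (hD'D hp) r hr.2).1⟩,
    ⟨(hJabs p (hD'D hp) r hr.1).2, (hD'abs p (hD'D hp) r hr.2).2⟩⟩

lemma K_ideal_subset_K (hD' : D' ∈ P.idealsIn D) : P.K D' ⊆ P.K D :=
  fun _ hr => Set.mem_sInter.2 fun _ hJ => (Set.mem_sInter.1 hr _ (inter_mem_idealsIn hD' hJ)).1

variable
  (hassoc : ∀ p ∈ D, ∀ q ∈ D, ∀ r ∈ D, P.uprod (P.uprod p q) r = P.uprod p (P.uprod q r))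
include hassoc

lemma sandwich_mem_idealsIn {I : Set (Ultrafilter α)} (hD' : D' ∈ P.idealsIn D)
    (hI : I ∈ P.idealsIn D') :
    {r | ∃ a ∈ D', ∃ x ∈ I, ∃ b ∈ D', P.uprod a (P.uprod x b) = r} ∈ P.idealsIn D := by
  obtain ⟨hD'D, -, hD'abs⟩ := hD'
  obtain ⟨hID', ⟨x₀, hx₀⟩, hIabs⟩ := hI
  refine ⟨?_, ⟨_, x₀, hID' hx₀, x₀, hx₀, x₀, hID' hx₀, rfl⟩, ?_⟩
  · rintro _ ⟨a, ha, x, hx, b, hb, rfl⟩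
    exact hD'D (hID' (hIabs a ha _ (hIabs b hb x hx).2).1)
  rintro p hp _ ⟨a, ha, x, hx, b, hb, rfl⟩
  have hxb : P.uprod x b ∈ D := hD'D (hID' (hIabs b hb x hx).2)
  constructor
  · rw [← hassoc p hp a (hD'D ha) _ hxb]
    exact ⟨_, (hD'abs p hp a ha).1, x, hx, b, hb, rfl⟩
  · rw [hassoc a (hD'D ha) _ hxb p hp, hassoc x (hD'D (hID' hx)) b (hD'D hb) p hp]
    exact ⟨a, ha, x, hx, _, (hD'abs p hp b hb).2, rfl⟩

lemma K_subset_K_ideal (hD' : D' ∈ P.idealsIn D) : P.K D ⊆ P.K D' := by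
  refine fun r hr => Set.mem_sInter.2 fun I hI => ?_
  obtain ⟨a, ha, x, hx, b, hb, rfl⟩ :=
    Set.mem_sInter.1 hr _ (sandwich_mem_idealsIn hassoc hD' hI)
  obtain ⟨-, -, hIabs⟩ := hI
  exact (hIabs a ha _ (hIabs b hb x hx).2).1

lemma K_eq_K_of_mem_idealsIn (hD' : D' ∈ P.idealsIn D) : P.K D' = P.K D :=
  (K_ideal_subset_K hD').antisymm (K_subset_K_ideal hassoc hD')

end SmallestIdeal

end PartialSemigroup

open PartialSemigroup

theorem stmt14_general {α : Type*} (P : PartialSemigroup α) (S : Set α)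
    (hSadeq : ∀ H : Finset α, ↑H ⊆ S → ∃ y ∈ S, ∀ x ∈ H, P.defined x y ∧ P.mul x y ∈ S)
    (hsub : ∀ y : α, ∃ H : Finset α, ↑H ⊆ S ∧
      {z | z ∈ S ∧ ∀ x ∈ H, P.defined x z ∧ P.mul x z ∈ S} ⊆ P.RT y)
    (hideal : ∀ x ∈ S, ∀ y : α,
      (P.defined x y → P.mul x y ∈ S) ∧ (P.defined y x → P.mul y x ∈ S)) :
    (∀ p ∈ P.deltaT, ∀ q ∈ P.deltaSub S,
      P.uprod p q ∈ P.deltaSub S ∧ P.uprod q p ∈ P.deltaSub S) ∧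
    P.K (P.deltaSub S) = P.K P.deltaT := by
  have habs : ∀ p ∈ P.deltaT, ∀ q ∈ P.deltaSub S,
      P.uprod p q ∈ P.deltaSub S ∧ P.uprod q p ∈ P.deltaSub S := fun p hp q hq =>
    ⟨uprod_mem_deltaSub_left hideal hsub hp hq, uprod_mem_deltaSub_right hideal hp hq⟩
  exact ⟨habs, K_eq_K_of_mem_idealsIn (fun p _ q hq r hr => uprod_assoc hq hr)
    ⟨deltaSub_subset_deltaT hsub, deltaSub_nonempty hSadeq, habs⟩⟩

/-- If T is an adequate partial semigroup and S ⊆ T an adequate partial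
subsemigroup that is an ideal of T, then δS is a two-sided ideal of δT, and
K(δS) = K(δT). -/
theorem stmt14 {α : Type*} (P : PartialSemigroup α) (S : Set α)
    (hTadeq : ∀ H : Finset α, ∃ y, ∀ x ∈ H, P.defined x y)
    (hSadeq : ∀ H : Finset α, ↑H ⊆ S → ∃ y ∈ S, ∀ x ∈ H, P.defined x y ∧ P.mul x y ∈ S)
    (hsub : ∀ y : α, ∃ H : Finset α, ↑H ⊆ S ∧
      {z | z ∈ S ∧ ∀ x ∈ H, P.defined x z ∧ P.mul x z ∈ S} ⊆ P.RT y)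
    (hideal : ∀ x ∈ S, ∀ y : α,
      (P.defined x y → P.mul x y ∈ S) ∧ (P.defined y x → P.mul y x ∈ S)) :
    (∀ p ∈ P.deltaT, ∀ q ∈ P.deltaSub S,
      P.uprod p q ∈ P.deltaSub S ∧ P.uprod q p ∈ P.deltaSub S) ∧
    P.K (P.deltaSub S) = P.K P.deltaT :=
  stmt14_general P S hSadeq hsub hideal
end
end
end
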